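/- If the all-to-all traffic matrix (with demand 1/n between every ordered pair of n servers) is feasible in a capacitated graph G with throughput t, then every hose-model traffic matrix (each server sends at most 1 unit total and receives at most 1 unit total) is feasible in G with throughput at least t/2. -/

import Mathlib

/-!
Valiant load balancing. Route the commodity `(a, b)` of a hose matrix `T` in two phases through
every node `m` at once: send `T a b / 2` times the all-to-all flow from `a` to `m`, then the same
multiple of the all-to-all flow from `m` to `b`. Each all-to-all commodity carries `t / n`, so the
`n` relays deliver `t · T a b / 2`. On any link, the first phase uses the all-to-all flows with
source `a` weighted by the row sum of `T` at `a`, the second those with sink `b` weighted by the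
column sum at `b`; both sums are at most `1`, so together they use at most the whole all-to-all
flow, which fits into the capacities.
-/

open Finset

/-- A multicommodity flow `f s t u v` (flow of commodity `(s,t)` on directed link `(u,v)`)
routing demand `D` in a network with capacities `c`. -/
def IsFlow {V : Type*} [Fintype V] (c D : V → V → ℝ) (f : V → V → V → V → ℝ) : Prop :=
  (∀ s t u v, 0 ≤ f s t u v) ∧
  (∀ u v, (∑ s : V, ∑ t : V, f s t u v) ≤ c u v) ∧
  (∀ s t u, u ≠ s → u ≠ t → (∑ v : V, f s t v u) = ∑ v : V, f s t u v) ∧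
  (∀ s t, s ≠ t → (∑ v : V, f s t s v) - (∑ v : V, f s t v s) = D s t)

/-- The traffic matrix `D` is feasible in the network with capacities `c`. -/
def Feasible {V : Type*} [Fintype V] (c D : V → V → ℝ) : Prop := ∃ f, IsFlow c D f

/-- Hose model: each server sends at most 1 unit in total and receives at most 1 unit. -/
def Hose {V : Type*} [Fintype V] (T : V → V → ℝ) : Prop :=
  (∀ v w, 0 ≤ T v w) ∧ (∀ v, (∑ w : V, T v w) ≤ 1) ∧ (∀ v, (∑ w : V, T w v) ≤ 1)

section

variable {V : Type*} [Fintype V]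

def netOutflow : (V → V → ℝ) →ₗ[ℝ] V → ℝ where
  toFun g u := ∑ v, g u v - ∑ v, g v u
  map_add' g h := by
    ext u
    simp only [Pi.add_apply, sum_add_distrib]
    ring
  map_smul' a g := by
    ext u
    simp only [Pi.smul_apply, smul_eq_mul, RingHom.id_apply, ← mul_sum]
    ring

theorem netOutflow_apply (g : V → V → ℝ) (u : V) :
    netOutflow g u = ∑ v, g u v - ∑ v, g v u := rfl

theorem sum_netOutflow (g : V → V → ℝ) : ∑ u, netOutflow g u = 0 := by
  simp only [netOutflow_apply, sum_sub_distrib]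
  rw [sum_comm, sub_self]

theorem netOutflow_eq_of_conserved [DecidableEq V] {g : V → V → ℝ} {s t : V}
    (hcons : ∀ u, u ≠ s → u ≠ t → netOutflow g u = 0) :
    netOutflow g = netOutflow g s • (Pi.single s 1 - Pi.single t 1) := by
  have htotal := sum_netOutflow g
  by_cases hst : s = t
  · subst hst
    have hs : netOutflow g s = 0 := by
      rwa [Fintype.sum_eq_single s fun u hu => hcons u hu hu] at htotal
    ext u
    by_cases hu : u = s
    · simp [hu, hs]
    · simp [hcons u hu hu]
  · rw [Fintype.sum_eq_add s t hst fun u hu => hcons u hu.1 hu.2] at htotal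
    ext u
    by_cases hus : u = s
    · simp [hus, hst]
    by_cases hut : u = t
    · simp only [hut, Pi.smul_apply, Pi.sub_apply, Pi.single_eq_of_ne (Ne.symm hst),
        Pi.single_eq_same, smul_eq_mul]
      linarith
    · simp [hus, hut, hcons u hus hut]

theorem isFlow_iff [DecidableEq V] {c D : V → V → ℝ} {f : V → V → V → V → ℝ} :
    IsFlow c D f ↔ (∀ s t u v, 0 ≤ f s t u v) ∧ (∀ u v, ∑ s, ∑ t, f s t u v ≤ c u v) ∧
      ∀ s t, netOutflow (f s t) = D s t • (Pi.single s 1 - Pi.single t 1) := by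
  constructor
  · rintro ⟨hnonneg, hcap, hcons, hdemand⟩
    refine ⟨hnonneg, hcap, fun s t => ?_⟩
    have hcons' : ∀ u, u ≠ s → u ≠ t → netOutflow (f s t) u = 0 := fun u hus hut => by
      rw [netOutflow_apply, hcons s t u hus hut, sub_self]
    rw [netOutflow_eq_of_conserved hcons']
    by_cases hst : s = t
    · simp [hst]
    · rw [netOutflow_apply, hdemand s t hst]
  · rintro ⟨hnonneg, hcap, hnet⟩
    refine ⟨hnonneg, hcap, fun s t u hus hut => ?_, fun s t hst => ?_⟩
    · have := congrFun (hnet s t) u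
      simp only [netOutflow_apply, Pi.smul_apply, Pi.sub_apply, Pi.single_apply, hus, hut,
        if_false, sub_self, smul_zero, sub_eq_zero] at this
      exact this.symm
    · have := congrFun (hnet s t) s
      simpa [netOutflow_apply, Ne.symm hst] using this

theorem sum_mul_sum_add_le_of_hose {T a : V → V → ℝ} (hT : Hose T) (ha : ∀ i j, 0 ≤ a i j) :
    ∑ s, ∑ t, T s t * ∑ m, (a s m + a m t) ≤ 2 * ∑ s, ∑ m, a s m := by
  obtain ⟨-, hrow, hcol⟩ := hT
  have hsplit : ∑ s, ∑ t, T s t * ∑ m, (a s m + a m t) =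
      ∑ s, (∑ t, T s t) * ∑ m, a s m + ∑ t, (∑ s, T s t) * ∑ m, a m t := by
    simp only [sum_add_distrib, mul_add, sum_mul]
    rw [sum_comm (f := fun s t => T s t * ∑ m, a m t)]
  have hfirst : ∑ s, (∑ t, T s t) * ∑ m, a s m ≤ ∑ s, ∑ m, a s m :=
    sum_le_sum fun s _ => mul_le_of_le_one_left (sum_nonneg fun m _ => ha s m) (hrow s)
  have hsecond : ∑ t, (∑ s, T s t) * ∑ m, a m t ≤ ∑ s, ∑ m, a s m := by
    rw [sum_comm (f := a)]
    exact sum_le_sum fun t _ => mul_le_of_le_one_left (sum_nonneg fun m _ => ha m t) (hcol t)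
  linarith

noncomputable def loadBalancedFlow (f : V → V → V → V → ℝ) (T : V → V → ℝ) : V → V → V → V → ℝ :=
  fun s t => (T s t / 2) • ∑ m, (f s m + f m t)

theorem loadBalancedFlow_apply (f : V → V → V → V → ℝ) (T : V → V → ℝ) (s t u v : V) :
    loadBalancedFlow f T s t u v = T s t / 2 * ∑ m, (f s m u v + f m t u v) := by
  simp [loadBalancedFlow, Finset.sum_apply]

theorem netOutflow_loadBalancedFlow [DecidableEq V] {f : V → V → V → V → ℝ} {d : ℝ}
    (hf : ∀ s t, netOutflow (f s t) = d • (Pi.single s 1 - Pi.single t 1)) (T : V → V → ℝ)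
    (s t : V) :
    netOutflow (loadBalancedFlow f T s t) =
      (Fintype.card V * d / 2 * T s t) • (Pi.single s 1 - Pi.single t 1) := by
  have hrelay : ∀ m, netOutflow (f s m + f m t) = d • (Pi.single s 1 - Pi.single t 1) := by
    intro m
    rw [map_add, hf, hf, ← smul_add, sub_add_sub_cancel]
  rw [loadBalancedFlow, map_smul, map_sum, sum_congr rfl fun m _ => hrelay m, sum_const,
    card_univ, ← Nat.cast_smul_eq_nsmul ℝ, smul_smul, smul_smul]
  congr 1
  ring

theorem Feasible.hose_of_const {c T : V → V → ℝ} {d : ℝ} (hconst : Feasible c fun _ _ => d)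
    (hT : Hose T) : Feasible c fun v w => Fintype.card V * d / 2 * T v w := by
  classical
  obtain ⟨f, hf⟩ := hconst
  obtain ⟨hnonneg, hcap, hnet⟩ := isFlow_iff.mp hf
  refine ⟨loadBalancedFlow f T, isFlow_iff.mpr ⟨fun s t u v => ?_, fun u v => ?_,
    netOutflow_loadBalancedFlow hnet T⟩⟩
  · rw [loadBalancedFlow_apply]
    exact mul_nonneg (div_nonneg (hT.1 s t) zero_le_two)
      (sum_nonneg fun m _ => add_nonneg (hnonneg _ _ _ _) (hnonneg _ _ _ _))
  · calc ∑ s, ∑ t, loadBalancedFlow f T s t u v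
        = (∑ s, ∑ t, T s t * ∑ m, (f s m u v + f m t u v)) / 2 := by
          simp only [loadBalancedFlow_apply, sum_div]
          exact sum_congr rfl fun s _ => sum_congr rfl fun t _ => by ring
      _ ≤ ∑ s, ∑ m, f s m u v :=
          div_le_of_le_mul₀ zero_le_two
            (sum_nonneg fun s _ => sum_nonneg fun m _ => hnonneg _ _ _ _)
            (by linarith [sum_mul_sum_add_le_of_hose hT fun s m => hnonneg s m u v])
      _ ≤ c u v := hcap u v

end

theorem allToAll_throughput_implies_hose_half_general {V : Type*} [Fintype V]
    (c : V → V → ℝ) (t : ℝ)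
    (hA2A : Feasible c (fun _ _ => t * (1 / (Fintype.card V : ℝ))))
    (T : V → V → ℝ) (hT : Hose T) :
    Feasible c (fun v w => (t / 2) * T v w) := by
  have hdemand : (fun v w => Fintype.card V * (t * (1 / (Fintype.card V : ℝ))) / 2 * T v w) =
      fun v w => t / 2 * T v w := by
    ext v w
    have hn : (Fintype.card V : ℝ) ≠ 0 := Nat.cast_ne_zero.mpr (Fintype.card_pos_iff.mpr ⟨v⟩).ne'
    field_simp
  exact hdemand ▸ hA2A.hose_of_const hT

/-- If the all-to-all TM (demand `1/n` between every ordered pair) is feasible with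
throughput `t`, then every hose-model TM is feasible with throughput at least `t/2`. -/
theorem allToAll_throughput_implies_hose_half {V : Type*} [Fintype V]
    (c : V → V → ℝ) (t : ℝ) (ht : 0 ≤ t)
    (hA2A : Feasible c (fun _ _ => t * (1 / (Fintype.card V : ℝ))))
    (T : V → V → ℝ) (hT : Hose T) :
    Feasible c (fun v w => (t / 2) * T v w) :=
  allToAll_throughput_implies_hose_half_general c t hA2A T hT
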